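/- Let T = (V,E) be a finite tree with n ≥ 2 vertices and maximal degree at most M. Then there exists a set S ⊆ V with |S| ≥ √n such that every two distinct vertices u, v ∈ S satisfy d(u,v) ≥ log n / (2 · log(M+2)), where d denotes the graph distance in T. -/
import Mathlib

open Finset

lemma exists_adj_dist_le {V : Type} (G : SimpleGraph V) (hconn : G.Connected)
    {s v : V} {r : ℕ} (h : G.dist s v = r + 1) :
    ∃ w, G.Adj w v ∧ G.dist s w ≤ r := by
  obtain ⟨p, hp⟩ := hconn.exists_walk_length_eq_dist v s
  rw [SimpleGraph.dist_comm, h] at hp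
  cases p with
  | nil => simp at hp
  | @cons _ w _ hadj q =>
      refine ⟨w, hadj.symm, ?_⟩
      rw [SimpleGraph.dist_comm]
      calc G.dist w s ≤ q.length := SimpleGraph.dist_le q
        _ = r := by simpa using hp

lemma ball_card_le {V : Type} [Fintype V] [DecidableEq V] (G : SimpleGraph V)
    [DecidableRel G.Adj] (hconn : G.Connected) (M : ℕ) (hdeg : ∀ v : V, G.degree v ≤ M)
    (s : V) (r : ℕ) :
    (univ.filter (fun v => G.dist s v ≤ r)).card ≤ (M + 1) ^ r := by
  induction r with
  | zero =>
      have hsub : (univ.filter (fun v => G.dist s v ≤ 0)) ⊆ {s} := by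
        intro v hv
        simp only [mem_filter, Nat.le_zero] at hv
        simp [((hconn.dist_eq_zero_iff).mp hv.2).symm]
      simpa using Finset.card_le_card hsub
  | succ r ih =>
      have hsub : (univ.filter (fun v => G.dist s v ≤ r + 1)) ⊆
          (univ.filter (fun v => G.dist s v ≤ r)).biUnion
            (fun w => insert w (G.neighborFinset w)) := by
        intro v hv
        simp only [mem_filter, mem_univ, true_and] at hv
        rcases Nat.lt_or_ge (G.dist s v) (r + 1) with h | h
        · exact Finset.mem_biUnion.mpr ⟨v, by simp [Nat.lt_succ_iff.mp h], by simp⟩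
        · have heq : G.dist s v = r + 1 := le_antisymm hv h
          obtain ⟨w, hadj, hw⟩ := exists_adj_dist_le G hconn heq
          exact Finset.mem_biUnion.mpr ⟨w, by simp [hw],
            Finset.mem_insert_of_mem (by simpa using hadj)⟩
      calc (univ.filter (fun v => G.dist s v ≤ r + 1)).card
          ≤ ∑ w ∈ univ.filter (fun v => G.dist s v ≤ r),
              (insert w (G.neighborFinset w)).card :=
            le_trans (Finset.card_le_card hsub) (Finset.card_biUnion_le)
        _ ≤ ∑ w ∈ univ.filter (fun v => G.dist s v ≤ r), (M + 1) := by
            refine Finset.sum_le_sum (fun w _ => ?_)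
            calc (insert w (G.neighborFinset w)).card
                ≤ (G.neighborFinset w).card + 1 := Finset.card_insert_le _ _
              _ ≤ M + 1 := by
                  have := hdeg w
                  rw [SimpleGraph.card_neighborFinset_eq_degree]
                  omega
        _ = (univ.filter (fun v => G.dist s v ≤ r)).card * (M + 1) := by
            simp [mul_comm]
        _ ≤ (M + 1) ^ r * (M + 1) := Nat.mul_le_mul_right _ ih
        _ = (M + 1) ^ (r + 1) := by ring

/-- Let `T` be a finite tree with `n ≥ 2` vertices and maximal degree
at most `M`.  Then there is a set `S` of vertices with `|S| ≥ √n` such that any two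
distinct vertices of `S` are at graph distance at least `log n / (2 log (M+2))`. -/
theorem tree_separated_set (V : Type) [Fintype V] [DecidableEq V]
    (G : SimpleGraph V) [DecidableRel G.Adj] (M : ℕ)
    (htree : G.IsTree) (hn : 2 ≤ Fintype.card V) (hdeg : ∀ v : V, G.degree v ≤ M) :
    ∃ S : Finset V, Real.sqrt (Fintype.card V) ≤ (S.card : ℝ) ∧
      ∀ u ∈ S, ∀ v ∈ S, u ≠ v →
        Real.log (Fintype.card V) / (2 * Real.log ((M : ℝ) + 2)) ≤ (G.dist u v : ℝ) := by
  classical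
  have hconn := htree.isConnected
  set n := Fintype.card V with hn_def
  have hn1 : (1 : ℝ) < n := by exact_mod_cast hn.trans_lt' one_lt_two
  have hlogn : 0 < Real.log n := Real.log_pos hn1
  have hM2 : (1 : ℝ) < (M : ℝ) + 2 := by
    have : (0:ℝ) ≤ (M:ℝ) := Nat.cast_nonneg _
    linarith
  have hlogM : 0 < Real.log ((M : ℝ) + 2) := Real.log_pos hM2
  set D : ℝ := Real.log n / (2 * Real.log ((M : ℝ) + 2)) with hD_def
  have hD_pos : 0 < D := by positivity
  set d0 : ℕ := ⌈D⌉₊ with hd0_def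
  have hd0_pos : 0 < d0 := Nat.ceil_pos.mpr hD_pos
  set r : ℕ := d0 - 1 with hr_def
  have hrd0 : d0 = r + 1 := by omega
  -- a maximal d0-separated set
  have hVne : Nonempty V := Fintype.card_pos_iff.mp (by omega)
  obtain ⟨v0⟩ := hVne
  set F : Finset (Finset V) := (univ : Finset (Finset V)).filter
      (fun S => ∀ u ∈ S, ∀ v ∈ S, u ≠ v → d0 ≤ G.dist u v) with hF_def
  have hFne : F.Nonempty := ⟨{v0}, by simp [hF_def]⟩
  obtain ⟨S, hSF, hSmax⟩ := Finset.exists_max_image F Finset.card hFne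
  have hSsep : ∀ u ∈ S, ∀ v ∈ S, u ≠ v → d0 ≤ G.dist u v := by
    have := Finset.mem_filter.mp hSF
    exact this.2
  -- covering property
  have hcover : ∀ v : V, ∃ u ∈ S, G.dist u v ≤ r := by
    intro v
    by_contra hcon
    push_neg at hcon
    have hsep' : ∀ u ∈ S, d0 ≤ G.dist u v := fun u hu => by
      have := hcon u hu; omega
    have hvS : v ∉ S := by
      intro hv
      have := hsep' v hv
      simp [SimpleGraph.dist_self] at this
      omega
    have hmem : insert v S ∈ F := by
      refine Finset.mem_filter.mpr ⟨Finset.mem_univ _, ?_⟩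
      intro a ha b hb hab
      rcases Finset.mem_insert.mp ha with ha | ha
      · rcases Finset.mem_insert.mp hb with hb | hb
        · exact absurd (ha.trans hb.symm) hab
        · rw [ha, SimpleGraph.dist_comm]; exact hsep' b hb
      · rcases Finset.mem_insert.mp hb with hb | hb
        · rw [hb]; exact hsep' a ha
        · exact hSsep a ha b hb hab
    have := hSmax _ hmem
    rw [Finset.card_insert_of_notMem hvS] at this
    omega
  -- counting
  have hcount : n ≤ S.card * (M + 1) ^ r := by
    have hsub : (univ : Finset V) ⊆
        S.biUnion (fun u => univ.filter (fun v => G.dist u v ≤ r)) := by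
      intro v _
      obtain ⟨u, hu, hd⟩ := hcover v
      exact Finset.mem_biUnion.mpr ⟨u, hu, by simp [hd]⟩
    calc n = (univ : Finset V).card := (Finset.card_univ).symm
      _ ≤ (S.biUnion (fun u => univ.filter (fun v => G.dist u v ≤ r))).card :=
          Finset.card_le_card hsub
      _ ≤ ∑ u ∈ S, (univ.filter (fun v => G.dist u v ≤ r)).card :=
          Finset.card_biUnion_le
      _ ≤ ∑ u ∈ S, (M + 1) ^ r :=
          Finset.sum_le_sum (fun u _ => ball_card_le G hconn M hdeg u r)
      _ = S.card * (M + 1) ^ r := by simp [mul_comm]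
  refine ⟨S, ?_, ?_⟩
  · -- √n ≤ S.card
    have hrD : (r : ℝ) < D := by
      have h1 : (d0 : ℝ) < D + 1 := Nat.ceil_lt_add_one hD_pos.le
      have h2 : (r : ℝ) = (d0 : ℝ) - 1 := by
        rw [hrd0]; push_cast; ring
      linarith
    have h3 : (r : ℝ) * (2 * Real.log ((M : ℝ) + 2)) < Real.log n :=
      (lt_div_iff₀ (by positivity)).mp hrD
    have hlt : ((M : ℝ) + 2) ^ (2 * r) < (n : ℝ) := by
      rw [← Real.log_lt_log_iff (by positivity) (by positivity), Real.log_pow]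
      push_cast
      linarith
    have hpow_lt : ((M : ℝ) + 2) ^ r < Real.sqrt n := by
      rw [show (2 * r) = r * 2 from by ring, pow_mul] at hlt
      exact (Real.lt_sqrt (by positivity)).mpr hlt
    have hc : (n : ℝ) ≤ (S.card : ℝ) * ((M : ℝ) + 1) ^ r := by exact_mod_cast hcount
    have h5 : ((M : ℝ) + 1) ^ r ≤ ((M : ℝ) + 2) ^ r :=
      pow_le_pow_left₀ (by positivity) (by linarith) r
    have hcard0 : (0 : ℝ) ≤ (S.card : ℝ) := Nat.cast_nonneg _
    have hs : Real.sqrt n * Real.sqrt n = (n : ℝ) := Real.mul_self_sqrt (by positivity)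
    have hmain : Real.sqrt n * Real.sqrt n ≤ (S.card : ℝ) * Real.sqrt n := by
      calc Real.sqrt n * Real.sqrt n = (n : ℝ) := hs
        _ ≤ (S.card : ℝ) * ((M : ℝ) + 1) ^ r := hc
        _ ≤ (S.card : ℝ) * ((M : ℝ) + 2) ^ r := mul_le_mul_of_nonneg_left h5 hcard0
        _ ≤ (S.card : ℝ) * Real.sqrt n := mul_le_mul_of_nonneg_left hpow_lt.le hcard0
    exact le_of_mul_le_mul_right hmain (Real.sqrt_pos.mpr (by linarith))
  · intro u hu v hv huv
    have h1 : (D : ℝ) ≤ (d0 : ℝ) := Nat.le_ceil D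
    have h2 : (d0 : ℝ) ≤ (G.dist u v : ℝ) := by
      exact_mod_cast hSsep u hu v hv huv
    exact h1.trans h2
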